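/- Let g be a Lie superalgebra over ℂ with sl2-triple (e,h,f), minimal grading, dual homogeneous bases {z_α}, {z_α*} of g(−1) with respect to ⟨x,y⟩=(e,[x,y]), and let w ∈ g(1) satisfy [e,w]=0. Then Σ_{α∈S(−1)} [z_α, [z_α*, w]] = ((s−r)/2)·[w,f], where s = dim g(−1)_0̄ and r = dim g(−1)_1̄. -/

import Mathlib

/-!
Write `T = ∑ α, [z_α, [z_α*, w]]`. Super Jacobi gives
`[z_α, [z_α*, w]] = [[z_α, z_α*], w] + (-1)^|α| [z_α*, [z_α, w]]`.
Since `[z_α, z_α*] ∈ ℂ f` and its pairing with `e` is `-(-1)^|α|` by duality, the first term is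
`(-1)^|α| [w, f]`. Reindexing the second sum by the involution `τ` that matches the two dual bases
turns it into `-T`, so `2 T = (∑ α, (-1)^|α|) [w, f] = (s - r) [w, f]`.
-/

theorem mul_self_zmod_two (a : ZMod 2) : a * a = a := by
  fin_cases a <;> rfl

section SuperBracket

variable {L : Type*} [AddCommGroup L] [Module ℂ L] (br : L →ₗ[ℂ] L →ₗ[ℂ] L)
  (Lp : ZMod 2 → Submodule ℂ L)

theorem bracket_even_left_eq_neg (hcompl : Codisjoint (Lp 0) (Lp 1))
    (hskew : ∀ (i j : ZMod 2), ∀ x ∈ Lp i, ∀ y ∈ Lp j,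
      br x y = -(((-1 : ℂ) ^ (i * j).val) • br y x))
    {x : L} (hx : x ∈ Lp 0) (w : L) : br x w = -br w x := by
  obtain ⟨w₀, hw₀, w₁, hw₁, rfl⟩ := Submodule.mem_sup.mp
    (hcompl.eq_top ▸ Submodule.mem_top : w ∈ Lp 0 ⊔ Lp 1)
  have h₀ := hskew 0 0 x hx w₀ hw₀
  have h₁ := hskew 0 1 x hx w₁ hw₁
  simp only [zero_mul, ZMod.val_zero, pow_zero, one_smul] at h₀ h₁
  simp only [map_add, LinearMap.add_apply, h₀, h₁, neg_add]

theorem bracket_bracket_of_mem_same_parity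
    (hJac : ∀ (i j : ZMod 2), ∀ x ∈ Lp i, ∀ y ∈ Lp j, ∀ w : L,
      br (br x y) w = br x (br y w) - ((-1 : ℂ) ^ (i * j).val) • br y (br x w))
    {i : ZMod 2} {x y : L} (hx : x ∈ Lp i) (hy : y ∈ Lp i) (w : L) :
    br x (br y w) = br (br x y) w + ((-1 : ℂ) ^ i.val) • br y (br x w) := by
  rw [hJac i i x hx y hy w, mul_self_zmod_two, sub_add_cancel]

end SuperBracket

theorem eq_smul_of_mem_span_singleton {K V : Type*} [Field K] [AddCommGroup V] [Module K V]
    {f u : V} (φ : V →ₗ[K] K) (hφ : φ f = 1) (hu : u ∈ Submodule.span K {f}) :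
    u = φ u • f := by
  obtain ⟨a, rfl⟩ := Submodule.mem_span_singleton.mp hu
  simp [hφ]

theorem sum_neg_one_pow_val_eq_card_sub_card {ι : Type*} [Fintype ι] (p : ι → ZMod 2) :
    ∑ i, (-1 : ℂ) ^ (p i).val =
      ((Finset.univ.filter fun i => p i = 0).card : ℂ) -
        ((Finset.univ.filter fun i => p i = 1).card : ℂ) := by
  have hparity : ∀ a : ZMod 2, a = 0 ∨ a = 1 := by decide
  have hsign : ∀ i, (-1 : ℂ) ^ (p i).val = if p i = 0 then 1 else -1 := fun i => by
    rcases hparity (p i) with hpi | hpi <;> simp [hpi, ZMod.val_one]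
  have hodd : (Finset.univ.filter fun i => ¬ p i = 0) = Finset.univ.filter fun i => p i = 1 :=
    Finset.filter_congr fun i _ => by rcases hparity (p i) with hpi | hpi <;> simp [hpi]
  rw [Finset.sum_congr rfl fun i _ => hsign i, Finset.sum_ite, hodd]
  simp [sub_eq_add_neg]

theorem sum_neg_one_pow_smul_bracket_swap_eq_neg {L ι : Type*} [AddCommGroup L] [Module ℂ L]
    [Fintype ι] (br : L →ₗ[ℂ] L →ₗ[ℂ] L) (p : ι → ZMod 2) (z zstar : ι → L) (τ : ι → ι)
    (hτinv : ∀ i, τ (τ i) = i) (hτp : ∀ i, p (τ i) = p i) (hτ1 : ∀ i, zstar i = z (τ i))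
    (hτ2 : ∀ i, zstar (τ i) = -(((-1 : ℂ) ^ (p i).val) • z i)) (w : L) :
    ∑ i, ((-1 : ℂ) ^ (p i).val) • br (zstar i) (br (z i) w) =
      -∑ i, br (z i) (br (zstar i) w) := by
  have hsq : ∀ n : ℕ, (-1 : ℂ) ^ n * (-1) ^ n = 1 := fun n => by rw [← mul_pow]; simp
  rw [← Equiv.sum_comp (Function.Involutive.toPerm τ hτinv), ← Finset.sum_neg_distrib]
  refine Finset.sum_congr rfl fun i _ => ?_
  simp only [Function.Involutive.coe_toPerm hτinv, hτp, hτ2, ← hτ1, map_neg, map_smul,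
    LinearMap.neg_apply, LinearMap.smul_apply, smul_neg, smul_smul, hsq, one_smul]

theorem stmt10_general
    {L : Type*} [AddCommGroup L] [Module ℂ L]
    (br : L →ₗ[ℂ] L →ₗ[ℂ] L)
    (Lp : ZMod 2 → Submodule ℂ L)
    (hcompl : IsCompl (Lp 0) (Lp 1))
    (hskew : ∀ (i j : ZMod 2), ∀ x ∈ Lp i, ∀ y ∈ Lp j,
      br x y = -(((-1 : ℂ) ^ (i * j).val) • br y x))
    (hJac : ∀ (i j : ZMod 2), ∀ x ∈ Lp i, ∀ y ∈ Lp j, ∀ w : L,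
      br (br x y) w = br x (br y w) - ((-1 : ℂ) ^ (i * j).val) • br y (br x w))
    (B : L →ₗ[ℂ] L →ₗ[ℂ] ℂ)
    (e h f : L) (hfp : f ∈ Lp 0)
    (hBef : B e f = 1)
    {ι : Type*} [Fintype ι] [DecidableEq ι]
    (p : ι → ZMod 2) (z zstar : ι → L)
    (hz : ∀ i, z i ∈ Lp (p i)) (hzs : ∀ i, zstar i ∈ Lp (p i))
    (hzdeg : ∀ i, br h (z i) = (-1 : ℂ) • z i)
    (hzsdeg : ∀ i, br h (zstar i) = (-1 : ℂ) • zstar i)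
    (hdual : ∀ i j, B e (br (zstar i) (z j)) = if i = j then (1 : ℂ) else 0)
    (hm2span : ∀ x y : L, br h x = (-1 : ℂ) • x → br h y = (-1 : ℂ) • y →
      br x y ∈ Submodule.span ℂ ({f} : Set L))
    (τ : ι → ι) (hτinv : ∀ i, τ (τ i) = i) (hτp : ∀ i, p (τ i) = p i)
    (hτ1 : ∀ i, zstar i = z (τ i))
    (hτ2 : ∀ i, zstar (τ i) = -(((-1 : ℂ) ^ (p i).val) • z i))
    :
    ∀ w : L, br h w = w → br e w = 0 →
      ∑ i, br (z i) (br (zstar i) w) =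
        ((((Finset.univ.filter fun i => p i = 0).card : ℂ) -
          ((Finset.univ.filter fun i => p i = 1).card : ℂ)) / 2) • br w f := by
  intro w _ _
  have hpair : ∀ i, br (z i) (zstar i) = -((-1 : ℂ) ^ (p i).val • f) := fun i => by
    rw [eq_smul_of_mem_span_singleton (B e) hBef (hm2span _ _ (hzdeg i) (hzsdeg i)),
      hskew _ _ _ (hz i) _ (hzs i), mul_self_zmod_two]
    simp [hdual]
  have hterm : ∀ i, br (z i) (br (zstar i) w) =
      (-1 : ℂ) ^ (p i).val • br w f + (-1 : ℂ) ^ (p i).val • br (zstar i) (br (z i) w) :=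
    fun i => by
      rw [bracket_bracket_of_mem_same_parity br Lp hJac (hz i) (hzs i), hpair, map_neg,
        map_smul, LinearMap.neg_apply, LinearMap.smul_apply,
        bracket_even_left_eq_neg br Lp hcompl.codisjoint hskew hfp, smul_neg, neg_neg]
  set T := ∑ i, br (z i) (br (zstar i) w)
  have hsplit : T = (∑ i, (-1 : ℂ) ^ (p i).val) • br w f - T := by
    rw [sub_eq_add_neg,
      ← sum_neg_one_pow_smul_bracket_swap_eq_neg br p z zstar τ hτinv hτp hτ1 hτ2 w,
      Finset.sum_smul, ← Finset.sum_add_distrib]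
    exact Finset.sum_congr rfl fun i _ => hterm i
  rw [sum_neg_one_pow_val_eq_card_sub_card] at hsplit
  linear_combination (norm := module) (2⁻¹ : ℂ) • hsplit

theorem stmt10
    {L : Type*} [AddCommGroup L] [Module ℂ L]
    (br : L →ₗ[ℂ] L →ₗ[ℂ] L)
    (Lp : ZMod 2 → Submodule ℂ L)
    (hcompl : IsCompl (Lp 0) (Lp 1))
    (hbrp : ∀ (i j : ZMod 2), ∀ x ∈ Lp i, ∀ y ∈ Lp j, br x y ∈ Lp (i + j))
    (hskew : ∀ (i j : ZMod 2), ∀ x ∈ Lp i, ∀ y ∈ Lp j,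
      br x y = -(((-1 : ℂ) ^ (i * j).val) • br y x))
    (hJac : ∀ (i j : ZMod 2), ∀ x ∈ Lp i, ∀ y ∈ Lp j, ∀ w : L,
      br (br x y) w = br x (br y w) - ((-1 : ℂ) ^ (i * j).val) • br y (br x w))
    (B : L →ₗ[ℂ] L →ₗ[ℂ] ℂ)
    (hBeven : ∀ x ∈ Lp 0, ∀ y ∈ Lp 1, B x y = 0 ∧ B y x = 0)
    (hBsuper : ∀ (i j : ZMod 2), ∀ x ∈ Lp i, ∀ y ∈ Lp j,
      B x y = ((-1 : ℂ) ^ (i * j).val) * B y x)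
    (hBinv : ∀ a b c : L, B (br a b) c = B a (br b c))
    (e h f : L) (hep : e ∈ Lp 0) (hhp : h ∈ Lp 0) (hfp : f ∈ Lp 0)
    (hef : br e f = h) (hhe : br h e = (2 : ℂ) • e) (hhf : br h f = (-2 : ℂ) • f)
    (hBef : B e f = 1)
    {ι : Type*} [Fintype ι] [DecidableEq ι]
    (p : ι → ZMod 2) (z zstar : ι → L)
    (hz : ∀ i, z i ∈ Lp (p i)) (hzs : ∀ i, zstar i ∈ Lp (p i))
    (hzdeg : ∀ i, br h (z i) = (-1 : ℂ) • z i)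
    (hzsdeg : ∀ i, br h (zstar i) = (-1 : ℂ) • zstar i)
    (hdual : ∀ i j, B e (br (zstar i) (z j)) = if i = j then (1 : ℂ) else 0)
    (hm2span : ∀ x y : L, br h x = (-1 : ℂ) • x → br h y = (-1 : ℂ) • y →
      br x y ∈ Submodule.span ℂ ({f} : Set L))
    (τ : ι → ι) (hτinv : ∀ i, τ (τ i) = i) (hτp : ∀ i, p (τ i) = p i)
    (hτ1 : ∀ i, zstar i = z (τ i))
    (hτ2 : ∀ i, zstar (τ i) = -(((-1 : ℂ) ^ (p i).val) • z i))
    (hexp : ∀ u : L, br h u = (-1 : ℂ) • u → u = ∑ i, B e (br (zstar i) u) • z i)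
    :
    ∀ w : L, br h w = w → br e w = 0 →
      ∑ i, br (z i) (br (zstar i) w) =
        ((((Finset.univ.filter fun i => p i = 0).card : ℂ) -
          ((Finset.univ.filter fun i => p i = 1).card : ℂ)) / 2) • br w f :=
  stmt10_general br Lp hcompl hskew hJac B e h f hfp hBef p z zstar hz hzs hzdeg hzsdeg hdual
    hm2span τ hτinv hτp hτ1 hτ2
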